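/- arXiv:1802.04650 — 2 statements merged into one kernel-verified Lean document; each statement's English description precedes it below -/
import Mathlib

section
/- In the two-level θ-method multirate step with refinement ratio 1/2 described in Section 3.1 (where flux F_{i+1/2} is recomputed at the half step while F_{i-1/2} and F_{i+3/2} are frozen with factor 1/2), the sum of mass changes over cells i and i+1 satisfies Δx (u_i^{n+1} - u_i^n) + Δx (u_{i+1}^{n+1} - u_{i+1}^n) = -(θ F_{i+3/2}^{n+1} + (1-θ) F_{i+3/2}^n) + (θ F_{i-1/2}^{n+1} + (1-θ) F_{i-1/2}^n); in particular the contributions of the recomputed interior flux F_{i+1/2} at times n, n+1/2 and n+1 cancel exactly. -/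
/-- In the two-level θ-method multirate step with refinement ratio 1/2 (flux at
interface i+1/2 recomputed at the half step, fluxes at i-1/2 and i+3/2 frozen with
factor 1/2), the total mass change over cells i and i+1 equals minus the difference
of the θ-averaged boundary fluxes: the contributions of the recomputed interior
flux cancel exactly. -/
theorem multirate_theta_two_cell_mass_balance
    (θ Δx : ℝ) (hθ0 : 0 ≤ θ) (hθ1 : θ ≤ 1) (hΔx : 0 < Δx)
    (Fl_n Fl_np1 Fc_n Fc_half Fc_np1 Fr_n Fr_np1 : ℝ)  -- l = i-1/2, c = i+1/2, r = i+3/2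
    (ui_n uip1_n : ℝ)
    (ui_half : ℝ)
    (hui_half : ui_half = ui_n - (θ / Δx) * (Fc_half - (1/2) * Fl_np1)
        - ((1 - θ) / Δx) * (Fc_n - (1/2) * Fl_n))
    (uip1_half : ℝ)
    (huip1_half : uip1_half = uip1_n - (θ / Δx) * ((1/2) * Fr_np1 - Fc_half)
        - ((1 - θ) / Δx) * ((1/2) * Fr_n - Fc_n))
    (ui_np1 : ℝ)
    (hui_np1 : ui_np1 = ui_half - (θ / Δx) * (Fc_np1 - (1/2) * Fl_np1)
        - ((1 - θ) / Δx) * (Fc_half - (1/2) * Fl_n))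
    (uip1_np1 : ℝ)
    (huip1_np1 : uip1_np1 = uip1_half - (θ / Δx) * ((1/2) * Fr_np1 - Fc_np1)
        - ((1 - θ) / Δx) * ((1/2) * Fr_n - Fc_half)) :
    Δx * (ui_np1 - ui_n) + Δx * (uip1_np1 - uip1_n)
      = -(θ * Fr_np1 + (1 - θ) * Fr_n) + (θ * Fl_np1 + (1 - θ) * Fl_n) := by
  subst hui_half huip1_half hui_np1 huip1_np1
  field_simp
  ring
end

section
/- For the multirate backward Euler upwind scheme for u_t + u_x = 0, where u_i^{n+1} = u_i^{n+1/2} - (Δt/(2Δx)) u_i^{n+1} + (Δt/(2Δx)) u_{i-1}^{n+1} (both fluxes evaluated at time t_{n+1}), the local truncation error obtained by inserting a smooth exact solution is O(Δt) + O(Δx); in particular no term proportional to Δt/Δx appears, so the scheme remains consistent when Δt/Δx is held constant. -/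
open Filter Topology

/-! The numerator of the truncation error, as a function of `Δx` at fixed `λ = Δt / Δx`,
vanishes at `Δx = 0`, and by the chain rule its derivative there is `(λ / 2) (u_t + u_x)`,
which is `0` by the equation. Since the denominator is `λ Δx / 2`, the truncation error is
`2 / λ` times a difference quotient of the numerator, which tends to that derivative. -/

section PartialDerivatives

variable {𝕜 : Type*} [NontriviallyNormedField 𝕜] {E : Type*} [NormedAddCommGroup E]
  [NormedSpace 𝕜 E] {u : 𝕜 → 𝕜 → E} {x t : 𝕜}

theorem fderiv_uncurry_apply (hu : DifferentiableAt 𝕜 (Function.uncurry u) (x, t)) (a b : 𝕜) :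
    fderiv 𝕜 (Function.uncurry u) (x, t) (a, b) =
      a • deriv (fun y => u y t) x + b • deriv (fun s => u x s) t := by
  set L := fderiv 𝕜 (Function.uncurry u) (x, t)
  have hx : HasDerivAt (fun y => u y t) (L (1, 0)) x :=
    (hu.hasFDerivAt.comp_hasDerivAt x ((hasDerivAt_id x).prodMk (hasDerivAt_const x t)) :)
  have ht : HasDerivAt (fun s => u x s) (L (0, 1)) t :=
    (hu.hasFDerivAt.comp_hasDerivAt t ((hasDerivAt_const t x).prodMk (hasDerivAt_id t)) :)
  have hab : ((a, b) : 𝕜 × 𝕜) = a • (1, 0) + b • (0, 1) := by simp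
  rw [hx.deriv, ht.deriv, hab, L.map_add, L.map_smul, L.map_smul]

theorem hasDerivAt_uncurry_comp_affine (hu : DifferentiableAt 𝕜 (Function.uncurry u) (x, t))
    (a b : 𝕜) :
    HasDerivAt (fun d => u (x + a * d) (t + b * d))
      (a • deriv (fun y => u y t) x + b • deriv (fun s => u x s) t) 0 := by
  rw [← fderiv_uncurry_apply hu]
  have hline : HasDerivAt (fun d : 𝕜 => (x + a * d, t + b * d)) (a, b) 0 := by
    simpa using (((hasDerivAt_id 0).const_mul a).const_add x).prodMk
      (((hasDerivAt_id 0).const_mul b).const_add t)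
  exact (hu.hasFDerivAt.comp_hasDerivAt_of_eq 0 hline (by simp) :)

end PartialDerivatives

/-- The numerator of the truncation error with `Δt = lam * Δx`, so that `Δt / (2 Δx) = lam / 2`. -/
noncomputable def multirateResidual (u : ℝ → ℝ → ℝ) (xi tn lam Δx : ℝ) : ℝ :=
  u xi (tn + lam * Δx) - u xi (tn + lam * Δx / 2)
    + lam / 2 * (u xi (tn + lam * Δx) - u (xi - Δx) (tn + lam * Δx))

theorem hasDerivAt_multirateResidual {u : ℝ → ℝ → ℝ} {xi tn : ℝ}
    (hu : DifferentiableAt ℝ (Function.uncurry u) (xi, tn)) (lam : ℝ) :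
    HasDerivAt (multirateResidual u xi tn lam)
      (lam / 2 * (deriv (fun s => u xi s) tn + deriv (fun y => u y tn) xi)) 0 := by
  have hnew := hasDerivAt_uncurry_comp_affine hu 0 lam
  have hhalf := hasDerivAt_uncurry_comp_affine hu 0 (lam / 2)
  have hup := hasDerivAt_uncurry_comp_affine hu (-1) lam
  simp only [zero_mul, zero_add, add_zero, neg_one_mul, ← sub_eq_add_neg, smul_eq_mul]
    at hnew hhalf hup
  have hfun : multirateResidual u xi tn lam = fun d =>
      u xi (tn + lam * d) - u xi (tn + lam / 2 * d)
        + lam / 2 * (u xi (tn + lam * d) - u (xi - d) (tn + lam * d)) := by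
    funext d
    simp only [multirateResidual, mul_div_right_comm]
  rw [hfun]
  exact ((hnew.sub hhalf).add ((hnew.sub hup).const_mul (lam / 2))).congr_deriv (by ring)

theorem multirate_backward_euler_consistent_general
    (u : ℝ → ℝ → ℝ) (hu : ContDiff ℝ 3 (Function.uncurry u))
    (hpde : ∀ x t, deriv (fun s => u x s) t + deriv (fun y => u y t) x = 0)
    (xi tn lam : ℝ) :
    Tendsto
      (fun Δx : ℝ =>
        let Δt := lam * Δx
        (u xi (tn + Δt) - u xi (tn + Δt / 2)
          + (Δt / (2 * Δx)) * (u xi (tn + Δt) - u (xi - Δx) (tn + Δt))) / (Δt / 2))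
      (𝓝[>] 0) (𝓝 0) := by
  have hres : HasDerivAt (multirateResidual u xi tn lam) 0 0 := by
    simpa [hpde] using hasDerivAt_multirateResidual (hu.differentiable (by norm_num) _) lam
  have hslope : Tendsto (fun Δx => 2 / lam * (Δx⁻¹ * multirateResidual u xi tn lam Δx))
      (𝓝[>] 0) (𝓝 0) := by
    simpa [multirateResidual] using hres.tendsto_slope_zero_right.const_mul (2 / lam)
  refine hslope.congr' ?_
  filter_upwards [self_mem_nhdsWithin] with Δx (hΔx : 0 < Δx)
  simp only [multirateResidual]
  field_simp

/-- Consistency of the multirate backward Euler upwind scheme for `u_t + u_x = 0`: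
both fluxes evaluated at `t_{n+1}`, at fixed Courant number `λ = Δt/Δx` the local
truncation error tends to `0` as `Δx → 0⁺` (it is `O(Δt) + O(Δx)`, with no term
proportional to `Δt/Δx`). -/
theorem multirate_backward_euler_consistent
    (u : ℝ → ℝ → ℝ) (hu : ContDiff ℝ 3 (Function.uncurry u))
    (hpde : ∀ x t, deriv (fun s => u x s) t + deriv (fun y => u y t) x = 0)
    (xi tn lam : ℝ) (hlam : 0 < lam) :
    Tendsto
      (fun Δx : ℝ =>
        let Δt := lam * Δx
        (u xi (tn + Δt) - u xi (tn + Δt / 2)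
          + (Δt / (2 * Δx)) * (u xi (tn + Δt) - u (xi - Δx) (tn + Δt))) / (Δt / 2))
      (𝓝[>] 0) (𝓝 0) :=
  multirate_backward_euler_consistent_general u hu hpde xi tn lam
end
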